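/- Let h be a real antisymmetric (2n)×(2n) matrix (h_{νμ} = −h_{μν}) and set A = Σ_{1 ≤ μ < ν ≤ 2n} h_{μν} c_μ c_ν. Then for every μ ∈ {1,…,2n}, conjugation of a single Majorana operator by the matrix exponential of A satisfies exp(A) · c_μ · exp(−A) = Σ_{ν=1}^{2n} (exp(−2h))_{μν} · c_ν, where exp(−2h) is the matrix exponential of the real matrix −2h. -/

import Mathlib

/-! The Majorana operators satisfy the canonical anticommutation relations, so the commutator
with the quadratic element `A` maps each `c_μ` to `Σ_ν K_{μν} c_ν` with `K = -2h`. Stacking the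
`c_ν` as the rows of a matrix `C` over the operator algebra, this says that `C` intertwines
`-diag(A)` with `K - diag(A)`; exponentiating the intertwining relation and using that `K` commutes
with `diag(A)` gives `exp(A) C exp(-A) = exp(K) C`. -/

open Matrix Complex
open scoped Kronecker

noncomputable section

abbrev QIdx (n : ℕ) := Fin n → Fin 2
abbrev NMat (n : ℕ) := Matrix (QIdx n) (QIdx n) ℂ
abbrev NMat2 (n : ℕ) := Matrix (QIdx n × QIdx n) (QIdx n × QIdx n) ℂ

/-- The 2×2 Pauli X matrix. -/
def σX : Matrix (Fin 2) (Fin 2) ℂ := !![0, 1; 1, 0]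
/-- The 2×2 Pauli Y matrix. -/
def σY : Matrix (Fin 2) (Fin 2) ℂ := !![0, -Complex.I; Complex.I, 0]
/-- The 2×2 Pauli Z matrix. -/
def σZ : Matrix (Fin 2) (Fin 2) ℂ := !![1, 0; 0, -1]

/-- Tensor (Kronecker) product of `n` one-qubit matrices, realized on index type `Fin n → Fin 2`. -/
def tensor {n : ℕ} (M : Fin n → Matrix (Fin 2) (Fin 2) ℂ) : NMat n :=
  Matrix.of fun f g => ∏ i, M i (f i) (g i)

/-- The Jordan–Wigner Majorana operator `c_μ` (0-based index: `c_{2i} = Z^{⊗i} X I…`,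
`c_{2i+1} = Z^{⊗i} Y I…`). -/
def majorana (n : ℕ) (μ : Fin (2 * n)) : NMat n :=
  tensor fun j =>
    if (j : ℕ) < (μ : ℕ) / 2 then σZ
    else if (j : ℕ) = (μ : ℕ) / 2 then (if (μ : ℕ) % 2 = 0 then σX else σY)
    else 1

/-- Ordered product `c^s` of the Majorana operators indexed by a subset `s`. -/
def cProd (n : ℕ) (s : Finset (Fin (2 * n))) : NMat n :=
  ((s.sort (· ≤ ·)).map (majorana n)).prod

/-- The module `B_κ`: the complex span of products of `κ` distinct Majoranas. -/
def Bspace (n κ : ℕ) : Submodule ℂ (NMat n) :=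
  Submodule.span ℂ {M | ∃ s : Finset (Fin (2 * n)), s.card = κ ∧ M = cProd n s}

/-- The Pauli string with `Z` on qubit `j` and identity elsewhere. -/
def pauliZ (n : ℕ) (j : Fin n) : NMat n := tensor fun k => if k = j then σZ else 1

/-- The Pauli string with `X` on qubits `j` and `j+1` and identity elsewhere. -/
def pauliXX (n : ℕ) (j : Fin n) : NMat n :=
  tensor fun k => if (k : ℕ) = (j : ℕ) ∨ (k : ℕ) = (j : ℕ) + 1 then σX else 1

/-- The parity operator `P = Z^{⊗n}`. -/
def parity (n : ℕ) : NMat n := tensor fun _ => σZ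

theorem σX_mul_self : σX * σX = 1 := by simp [σX, one_fin_two]
theorem σY_mul_self : σY * σY = 1 := by simp [σY, one_fin_two]
theorem σZ_mul_self : σZ * σZ = 1 := by simp [σZ, one_fin_two]
theorem σX_mul_σZ : σX * σZ = -(σZ * σX) := by simp [σX, σZ]
theorem σY_mul_σZ : σY * σZ = -(σZ * σY) := by simp [σY, σZ]
theorem σX_mul_σY : σX * σY = -(σY * σX) := by simp [σX, σY]

section Tensor

variable {n : ℕ}

theorem tensor_mul (M N : Fin n → Matrix (Fin 2) (Fin 2) ℂ) :
    tensor M * tensor N = tensor (M * N) := by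
  ext f g
  simp only [tensor, mul_apply, of_apply, Pi.mul_apply]
  rw [Fintype.prod_sum]
  exact Finset.sum_congr rfl fun k _ => Finset.prod_mul_distrib.symm

theorem tensor_one : tensor (1 : Fin n → Matrix (Fin 2) (Fin 2) ℂ) = 1 := by
  ext f g
  simp only [tensor, of_apply, Pi.one_apply, one_apply]
  split_ifs with hfg
  · simp [hfg]
  · obtain ⟨i, hi⟩ := Function.ne_iff.mp hfg
    exact Finset.prod_eq_zero (Finset.mem_univ i) (by simp [hi])

theorem tensor_eq_neg_of_eq_neg (M N : Fin n → Matrix (Fin 2) (Fin 2) ℂ) (j : Fin n)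
    (hj : M j = -N j) (hne : ∀ i ≠ j, M i = N i) : tensor M = -tensor N := by
  ext f g
  simp only [tensor, Matrix.neg_apply, of_apply]
  rw [← Finset.mul_prod_erase _ _ (Finset.mem_univ j),
    ← Finset.mul_prod_erase _ (fun i => N i (f i) (g i)) (Finset.mem_univ j),
    Finset.prod_congr rfl fun i hi => by rw [hne i (Finset.ne_of_mem_erase hi)], hj]
  simp

theorem tensor_anticomm (M N : Fin n → Matrix (Fin 2) (Fin 2) ℂ) (j : Fin n)
    (hj : M j * N j = -(N j * M j)) (hne : ∀ i ≠ j, M i * N i = N i * M i) :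
    tensor M * tensor N = -(tensor N * tensor M) := by
  rw [tensor_mul, tensor_mul]
  exact tensor_eq_neg_of_eq_neg _ _ j hj hne

end Tensor

theorem majorana_mul_self (n : ℕ) (μ : Fin (2 * n)) : majorana n μ * majorana n μ = 1 := by
  rw [majorana, tensor_mul, ← tensor_one]
  congr 1
  funext j
  simp only [Pi.mul_apply, Pi.one_apply]
  split_ifs <;> simp [σX_mul_self, σY_mul_self, σZ_mul_self]

theorem majorana_anticomm_of_lt {n : ℕ} {μ ν : Fin (2 * n)} (hμν : μ < ν) :
    majorana n μ * majorana n ν = -(majorana n ν * majorana n μ) := by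
  have hμν' : (μ : ℕ) < ν := hμν
  refine tensor_anticomm _ _ ⟨μ / 2, by omega⟩ ?_ fun i hi => ?_
  · simp only [lt_irrefl, if_false, if_true]
    split_ifs <;> first | omega | exact σX_mul_σZ | exact σY_mul_σZ | exact σX_mul_σY
  · have hi' : (i : ℕ) ≠ μ / 2 := fun h => hi (Fin.ext h)
    by_cases hlt : (i : ℕ) < μ / 2
    · rw [if_pos hlt, if_pos (by omega)]
    · rw [if_neg hlt, if_neg hi', one_mul, mul_one]

theorem majorana_mul_add_mul (n : ℕ) (μ ν : Fin (2 * n)) :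
    majorana n μ * majorana n ν + majorana n ν * majorana n μ = if μ = ν then 2 else 0 := by
  rcases lt_trichotomy μ ν with hμν | rfl | hνμ
  · simp [majorana_anticomm_of_lt hμν, hμν.ne]
  · simp [majorana_mul_self, one_add_one_eq_two]
  · simp [majorana_anticomm_of_lt hνμ, hνμ.ne']

section Commutator

variable {R 𝕜 ι : Type*} [Ring R] [CommRing 𝕜] [Algebra 𝕜 R] [Fintype ι] [LinearOrder ι]

theorem mul_mul_sub_mul_mul_eq (x y z : R) :
    x * y * z - z * (x * y) = x * (y * z + z * y) - (x * z + z * x) * y := by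
  noncomm_ring

theorem commutator_eq_sum_of_anticomm (c : ι → R)
    (hc : ∀ i j, c i * c j + c j * c i = if i = j then 2 else 0)
    (h : Matrix ι ι 𝕜) (hanti : ∀ i j, h j i = -h i j) (A : R)
    (hA : A = ∑ α, ∑ β, if α < β then h α β • (c α * c β) else 0) (μ : ι) :
    A * c μ - c μ * A = ∑ ν, (-2 * h μ ν) • c ν := by
  have hdiag : 2 * h μ μ = 0 := by linear_combination hanti μ μ
  calc _ = ∑ α, ∑ β, ((if α < β then (if β = μ then (2 * h α β) • c α else 0) else 0) -
          (if α < β then (if α = μ then (2 * h α β) • c β else 0) else 0)) := by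
        simp only [hA, Finset.sum_mul, Finset.mul_sum, ← Finset.sum_sub_distrib]
        refine Finset.sum_congr rfl fun α _ => Finset.sum_congr rfl fun β _ => ?_
        rcases lt_or_ge α β with hαβ | hαβ
        · simp only [if_pos hαβ]
          rw [smul_mul_assoc, mul_smul_comm, ← smul_sub, mul_mul_sub_mul_mul_eq, hc, hc]
          split_ifs <;> simp only [mul_two, two_mul, mul_zero, zero_mul] <;> module
        · simp [hαβ.not_gt]
    _ = ∑ ν, (if ν < μ then (2 * h ν μ) • c ν else 0) -
          ∑ ν, (if μ < ν then (2 * h μ ν) • c ν else 0) := by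
        simp only [Finset.sum_sub_distrib]
        congr 1
        · rw [Finset.sum_comm, Fintype.sum_eq_single μ fun β hβ => by simp [hβ]]
          simp
        · rw [Fintype.sum_eq_single μ fun α hα => by simp [hα]]
          simp
    _ = _ := by
        rw [← Finset.sum_sub_distrib]
        refine Finset.sum_congr rfl fun ν _ => ?_
        rcases lt_trichotomy ν μ with hνμ | rfl | hμν
        · simp [hνμ, hνμ.not_gt, hanti ν μ]
        · simp [hdiag]
        · simp [hμν, hμν.not_gt]

end Commutator

section Exponential

variable {𝔸 ι : Type*} [NormedRing 𝔸] [NormedAlgebra ℚ 𝔸] [Fintype ι] [DecidableEq ι]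

theorem Matrix.exp_map_algebraMap {𝕂 : Type*} [NormedField 𝕂] [NormedAlgebra ℚ 𝕂]
    [CompleteSpace 𝕂] [NormedAlgebra 𝕂 𝔸] (K : Matrix ι ι 𝕂) :
    NormedSpace.exp (K.map (algebraMap 𝕂 𝔸)) = (NormedSpace.exp K).map (algebraMap 𝕂 𝔸) :=
  let _ : NormedRing (Matrix ι ι 𝕂) := Matrix.linftyOpNormedRing
  let _ : NormedAlgebra ℚ (Matrix ι ι 𝕂) := Matrix.linftyOpNormedAlgebra
  let _ : NormedRing (Matrix ι ι 𝔸) := Matrix.linftyOpNormedRing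
  -- the operator norm induces the product uniformity, so completeness comes from `ι → ι → 𝕂`
  have _ : @CompleteSpace (Matrix ι ι 𝕂) PseudoMetricSpace.toUniformSpace :=
    inferInstanceAs (CompleteSpace (ι → ι → 𝕂))
  (NormedSpace.map_exp (algebraMap 𝕂 𝔸).mapMatrix
    (continuous_id.matrix_map (continuous_algebraMap 𝕂 𝔸)) K).symm

variable [CompleteSpace 𝔸]

theorem Matrix.semiconjBy_exp_right {x a b : Matrix ι ι 𝔸} (h : SemiconjBy x a b) :
    SemiconjBy x (NormedSpace.exp a) (NormedSpace.exp b) :=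
  let _ : NormedRing (Matrix ι ι 𝔸) := Matrix.linftyOpNormedRing
  let _ : NormedAlgebra ℚ (Matrix ι ι 𝔸) := Matrix.linftyOpNormedAlgebra
  have _ : @CompleteSpace (Matrix ι ι 𝔸) PseudoMetricSpace.toUniformSpace :=
    inferInstanceAs (CompleteSpace (ι → ι → 𝔸))
  h.exp_right

theorem Matrix.exp_diagonal_const (B : 𝔸) :
    NormedSpace.exp (diagonal fun _ : ι => B) = diagonal fun _ => NormedSpace.exp B := by
  rw [exp_diagonal]
  congr 1
  ext i
  exact NormedSpace.map_exp (Pi.evalRingHom (fun _ : ι => 𝔸) i) (continuous_apply i) _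

theorem exp_mul_mul_exp_neg_eq_sum_of_commutator (A : 𝔸) (c : ι → 𝔸) (K : Matrix ι ι 𝔸)
    (hAK : ∀ μ ν, Commute A (K μ ν)) (hK : ∀ μ, A * c μ - c μ * A = ∑ ν, K μ ν * c ν)
    (μ : ι) :
    NormedSpace.exp A * c μ * NormedSpace.exp (-A) = ∑ ν, NormedSpace.exp K μ ν * c ν := by
  let a : Matrix ι ι 𝔸 := diagonal fun _ => A
  let C : Matrix ι ι 𝔸 := of fun i _ => c i
  have hak : Commute a K := by
    ext i j
    simp [a, diagonal_mul, mul_diagonal, (hAK i j).eq]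
  have hCa : SemiconjBy C (-a) (K - a) := by
    ext i j
    rw [mul_neg, Matrix.neg_apply, mul_diagonal, sub_mul, Matrix.sub_apply, diagonal_mul,
      mul_apply]
    simp only [C, of_apply, ← hK]
    abel
  have hconj : NormedSpace.exp a * C * NormedSpace.exp (-a) = NormedSpace.exp K * C := by
    rw [mul_assoc, (semiconjBy_exp_right hCa).eq, ← mul_assoc,
      ← exp_add_of_commute _ _ (hak.sub_right (Commute.refl a)), add_sub_cancel]
  have hneg : -a = diagonal fun _ => -A := by simp [a]
  have := congrFun (congrFun hconj μ) μ
  rwa [hneg, exp_diagonal_const, exp_diagonal_const, mul_diagonal, diagonal_mul, mul_apply]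
    at this

theorem exp_mul_mul_exp_neg_eq_sum_smul_of_commutator {𝕂 : Type*} [NormedField 𝕂]
    [NormedAlgebra ℚ 𝕂] [CompleteSpace 𝕂] [NormedAlgebra 𝕂 𝔸] (A : 𝔸) (c : ι → 𝔸)
    (K : Matrix ι ι 𝕂) (hK : ∀ μ, A * c μ - c μ * A = ∑ ν, K μ ν • c ν) (μ : ι) :
    NormedSpace.exp A * c μ * NormedSpace.exp (-A) = ∑ ν, NormedSpace.exp K μ ν • c ν := by
  have := exp_mul_mul_exp_neg_eq_sum_of_commutator A c (K.map (algebraMap 𝕂 𝔸))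
    (fun _ _ => (Algebra.commutes _ A).symm) (by simpa [Algebra.smul_def] using hK) μ
  simpa [exp_map_algebraMap, Algebra.smul_def] using this

end Exponential

theorem exp_conj_majorana_general (n : ℕ)
    (h : Matrix (Fin (2 * n)) (Fin (2 * n)) ℝ) (hanti : ∀ μ ν, h ν μ = - h μ ν)
    (A : NMat n)
    (hA : A = ∑ μ : Fin (2 * n), ∑ ν : Fin (2 * n),
      if μ < ν then (h μ ν : ℂ) • (majorana n μ * majorana n ν) else 0)
    (μ : Fin (2 * n)) :
    NormedSpace.exp A * majorana n μ * NormedSpace.exp (-A) =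
      ∑ ν : Fin (2 * n),
        ((NormedSpace.exp ((-2 : ℝ) • h)) μ ν : ℂ) • majorana n ν := by
  let _ : NormedRing (NMat n) := Matrix.linftyOpNormedRing
  let _ : NormedAlgebra ℚ (NMat n) := Matrix.linftyOpNormedAlgebra
  let _ : NormedAlgebra ℝ (NMat n) := Matrix.linftyOpNormedAlgebra
  have _ : @CompleteSpace (NMat n) PseudoMetricSpace.toUniformSpace :=
    inferInstanceAs (CompleteSpace (QIdx n → QIdx n → ℂ))
  simp only [Complex.coe_smul] at hA ⊢
  refine exp_mul_mul_exp_neg_eq_sum_smul_of_commutator A (majorana n) _ (fun ν => ?_) μ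
  rw [commutator_eq_sum_of_anticomm _ (majorana_mul_add_mul n) h hanti A hA]
  simp [Matrix.smul_apply]

/-- For a real antisymmetric matrix `h` and `A = Σ_{μ<ν} h_{μν} c_μ c_ν`, conjugation of a
Majorana operator by `exp(A)` acts as the rotation `exp(−2h)` on the Majorana indices:
`exp(A) c_μ exp(−A) = Σ_ν (exp(−2h))_{μν} c_ν`. -/
theorem exp_conj_majorana (n : ℕ) (hn : 1 ≤ n)
    (h : Matrix (Fin (2 * n)) (Fin (2 * n)) ℝ) (hanti : ∀ μ ν, h ν μ = - h μ ν)
    (A : NMat n)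
    (hA : A = ∑ μ : Fin (2 * n), ∑ ν : Fin (2 * n),
      if μ < ν then (h μ ν : ℂ) • (majorana n μ * majorana n ν) else 0)
    (μ : Fin (2 * n)) :
    NormedSpace.exp A * majorana n μ * NormedSpace.exp (-A) =
      ∑ ν : Fin (2 * n),
        ((NormedSpace.exp ((-2 : ℝ) • h)) μ ν : ℂ) • majorana n ν :=
  exp_conj_majorana_general n h hanti A hA μ

end
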